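/- Let p ∈ ℝ, p ≠ 0, and define F(x,y,z) = x(x-y)(x²+y²+z²)² + (x²-y²)² - p²(2x⁴ - 4x³y + 2x²y² + 2x²z² - 2xyz²) + p⁴x²y² + p⁴x(x-y). Then for every t ∈ ℝ, the point T(t) = (t/(1+t²), (t+t³)/(1+t²), t²/(1+t²)) satisfies F(T(t)) = 0; i.e., the twisted cubic circle T lies on the sextic surface F = 0. -/
import Mathlib


/-- Implicit sextic equation of the circular surface `CS(T,p)` of the twisted
cubic circle. -/
def twistedF (p x y z : ℝ) : ℝ :=
  x * (x - y) * (x ^ 2 + y ^ 2 + z ^ 2) ^ 2 + (x ^ 2 - y ^ 2) ^ 2 -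
    p ^ 2 * (2 * x ^ 4 - 4 * x ^ 3 * y + 2 * x ^ 2 * y ^ 2 + 2 * x ^ 2 * z ^ 2 -
      2 * x * y * z ^ 2) + p ^ 4 * x ^ 2 * y ^ 2 + p ^ 4 * x * (x - y)

/-- The twisted cubic circle
`T(t) = (t/(1+t²), (t+t³)/(1+t²), t²/(1+t²))` lies on the sextic `twistedF p = 0`. -/
theorem stmt8 (p : ℝ) (hp : p ≠ 0) :
    ∀ t : ℝ, twistedF p (t / (1 + t ^ 2)) ((t + t ^ 3) / (1 + t ^ 2))
      (t ^ 2 / (1 + t ^ 2)) = 0 := by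
  intro t
  have h : (1 + t ^ 2) ≠ 0 := by positivity
  unfold twistedF
  field_simp
  ring
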